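/- arXiv:2511.20914 — 5 statements merged into one kernel-verified Lean document; each statement's English description precedes it below -/
import Mathlib

section
/- Let a₁ ≥ 0, a₂ > 0, b₁ ∈ ℝ, and set A = a₁² + a₂. Then ∫₀^∞ z · erf(a₁z + b₁) · exp(−a₂z²) dz = erf(b₁)/(2a₂) + (a₁/(2a₂√A)) · exp(−a₂b₁²/A) · (1 − erf(a₁b₁/√A)). -/
open Real MeasureTheory Filter Set

/-- The error function `erf x = (2/√π) ∫₀ˣ e^{-t²} dt`. -/
noncomputable def erf (x : ℝ) : ℝ :=
  (2 / Real.sqrt π) * ∫ t in (0 : ℝ)..x, Real.exp (-t ^ 2)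

lemma cont_gauss : Continuous fun t : ℝ => Real.exp (-t ^ 2) := by continuity

lemma hasDerivAt_erf (x : ℝ) :
    HasDerivAt erf ((2 / Real.sqrt π) * Real.exp (-x ^ 2)) x := by
  have h : HasDerivAt (fun y => ∫ t in (0 : ℝ)..y, Real.exp (-t ^ 2))
      (Real.exp (-x ^ 2)) x :=
    intervalIntegral.integral_hasDerivAt_right (cont_gauss.intervalIntegrable _ _)
      (cont_gauss.stronglyMeasurableAtFilter _ _) cont_gauss.continuousAt
  exact h.const_mul _

lemma continuous_erf : Continuous erf :=
  continuous_iff_continuousAt.2 fun x => (hasDerivAt_erf x).continuousAt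

lemma tendsto_erf_atTop : Tendsto erf atTop (nhds 1) := by
  have h : Tendsto (fun y => ∫ t in (0 : ℝ)..y, Real.exp (-t ^ 2)) atTop
      (nhds (∫ t in Ioi (0:ℝ), Real.exp (-t ^ 2))) :=
    intervalIntegral_tendsto_integral_Ioi 0
      ((integrable_exp_neg_mul_sq one_pos).integrableOn.congr_fun
        (fun t _ => by norm_num) measurableSet_Ioi) tendsto_id
  have h2 : (∫ t in Ioi (0:ℝ), Real.exp (-t ^ 2)) = Real.sqrt π / 2 := by
    have := integral_gaussian_Ioi 1
    simpa using this
  have := h.const_mul (2 / Real.sqrt π)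
  rw [h2] at this
  convert this using 2
  · rfl
  rw [div_mul_div_comm, mul_comm]
  rw [div_self]
  positivity

lemma monotone_erf : Monotone erf := by
  have : ∀ x, 0 ≤ (2 / Real.sqrt π) * Real.exp (-x ^ 2) := fun x => by positivity
  exact monotone_of_deriv_nonneg (fun x => (hasDerivAt_erf x).differentiableAt)
    (fun x => by rw [(hasDerivAt_erf x).deriv]; exact this x)

lemma erf_le_one (x : ℝ) : erf x ≤ 1 :=
  monotone_erf.ge_of_tendsto tendsto_erf_atTop x

lemma erf_neg (x : ℝ) : erf (-x) = - erf x := by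
  unfold erf
  rw [← mul_neg]
  congr 1
  rw [← intervalIntegral.integral_symm]
  rw [show (∫ t in (0:ℝ)..(-x), Real.exp (-t ^ 2)) =
      ∫ t in (0:ℝ)..(-x), Real.exp (-(-t) ^ 2) from by
    apply intervalIntegral.integral_congr; intro t _; ring_nf]
  rw [intervalIntegral.integral_comp_neg fun t => Real.exp (-t ^ 2)]
  norm_num

lemma neg_one_le_erf (x : ℝ) : -1 ≤ erf x := by
  have := erf_le_one (-x)
  rw [erf_neg] at this
  linarith

lemma abs_erf_le_one (x : ℝ) : |erf x| ≤ 1 :=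
  abs_le.2 ⟨neg_one_le_erf x, erf_le_one x⟩

lemma integral_gauss_shift (A c : ℝ) (hA : 0 < A) :
    ∫ z in Ioi (0 : ℝ), Real.exp (-A * (z + c) ^ 2) =
      (Real.sqrt π / (2 * Real.sqrt A)) * (1 - erf (Real.sqrt A * c)) := by
  have hsA : 0 < Real.sqrt A := Real.sqrt_pos.2 hA
  have hsq : Real.sqrt A ^ 2 = A := Real.sq_sqrt hA.le
  have hspi : (0:ℝ) < Real.sqrt π := Real.sqrt_pos.2 Real.pi_pos
  set F : ℝ → ℝ := fun z => (Real.sqrt π / (2 * Real.sqrt A)) * erf (Real.sqrt A * (z + c))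
  have hderiv : ∀ z ∈ Ioi (0:ℝ), HasDerivAt F (Real.exp (-A * (z + c) ^ 2)) z := by
    intro z _
    have hin : HasDerivAt (fun z : ℝ => Real.sqrt A * (z + c)) (Real.sqrt A) z := by
      simpa using ((hasDerivAt_id z).add_const c).const_mul (Real.sqrt A)
    have h := ((hasDerivAt_erf (Real.sqrt A * (z + c))).comp z hin).const_mul
      (Real.sqrt π / (2 * Real.sqrt A))
    refine h.congr_deriv ?_
    rw [mul_pow, hsq]
    field_simp
  have hint : IntegrableOn (fun z => Real.exp (-A * (z + c) ^ 2)) (Ioi (0:ℝ)) :=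
    ((integrable_exp_neg_mul_sq hA).comp_add_right c).integrableOn
  have htend : Tendsto F atTop (nhds ((Real.sqrt π / (2 * Real.sqrt A)) * 1)) := by
    apply Tendsto.const_mul
    apply tendsto_erf_atTop.comp
    apply Tendsto.const_mul_atTop hsA
    exact tendsto_atTop_add_const_right _ c tendsto_id
  have hcont : ContinuousWithinAt F (Ici 0) 0 := by
    apply Continuous.continuousWithinAt
    exact continuous_const.mul (continuous_erf.comp (by continuity))
  have key := integral_Ioi_of_hasDerivAt_of_tendsto hcont hderiv hint htend
  rw [key]
  simp [F]
  ring

/-- Korotkov-type integral identity: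
`∫₀^∞ z erf(a₁z + b₁) e^{-a₂z²} dz
  = erf(b₁)/(2a₂) + (a₁/(2a₂√A)) e^{-a₂b₁²/A} (1 - erf(a₁b₁/√A))` with `A = a₁² + a₂`. -/
theorem integral_mul_erf_exp_neg_sq
    (a₁ a₂ b₁ : ℝ) (ha₁ : 0 ≤ a₁) (ha₂ : 0 < a₂)
    (A : ℝ) (hA : A = a₁ ^ 2 + a₂) :
    ∫ z in Set.Ioi (0 : ℝ), z * erf (a₁ * z + b₁) * Real.exp (-a₂ * z ^ 2) =
      erf b₁ / (2 * a₂) +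
        (a₁ / (2 * a₂ * Real.sqrt A)) * Real.exp (-a₂ * b₁ ^ 2 / A) *
          (1 - erf (a₁ * b₁ / Real.sqrt A)) := by
  subst hA
  set A : ℝ := a₁ ^ 2 + a₂ with hA
  have hApos : 0 < A := by nlinarith [sq_nonneg a₁]
  have hsA : 0 < Real.sqrt A := Real.sqrt_pos.2 hApos
  have hsq : Real.sqrt A ^ 2 = A := Real.sq_sqrt hApos.le
  have hspi : (0:ℝ) < Real.sqrt π := Real.sqrt_pos.2 Real.pi_pos
  set c : ℝ := a₁ * b₁ / A with hc
  -- the two pieces of the derivative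
  set f₁ : ℝ → ℝ := fun z =>
    ((2 / Real.sqrt π) * Real.exp (-(a₁ * z + b₁) ^ 2) * a₁) *
      (-Real.exp (-a₂ * z ^ 2) / (2 * a₂)) with hf₁
  set f₂ : ℝ → ℝ := fun z => erf (a₁ * z + b₁) * (z * Real.exp (-a₂ * z ^ 2)) with hf₂
  set g : ℝ → ℝ := fun z => erf (a₁ * z + b₁) * (-Real.exp (-a₂ * z ^ 2) / (2 * a₂)) with hg
  have hderiv : ∀ z ∈ Ioi (0:ℝ), HasDerivAt g (f₁ z + f₂ z) z := by
    intro z _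
    have hin : HasDerivAt (fun z : ℝ => a₁ * z + b₁) a₁ z := by
      simpa using ((hasDerivAt_id z).const_mul a₁).add_const b₁
    have h1 : HasDerivAt (fun z => erf (a₁ * z + b₁))
        ((2 / Real.sqrt π) * Real.exp (-(a₁ * z + b₁) ^ 2) * a₁) z :=
      by have := (hasDerivAt_erf (a₁ * z + b₁)).comp z hin; exact this
    have h2 : HasDerivAt (fun z : ℝ => -Real.exp (-a₂ * z ^ 2) / (2 * a₂))
        (z * Real.exp (-a₂ * z ^ 2)) z := by
      have hi : HasDerivAt (fun z : ℝ => -a₂ * z ^ 2) (-a₂ * (2 * z)) z := by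
        simpa using (hasDerivAt_pow 2 z).const_mul (-a₂)
      have := ((Real.hasDerivAt_exp (-a₂ * z ^ 2)).comp z hi).neg.div_const (2 * a₂)
      refine this.congr_deriv ?_
      field_simp
    have := h1.mul h2
    exact this
  have hint₁ : IntegrableOn f₁ (Ioi (0:ℝ)) := by
    apply Integrable.mono' (g := fun z => ((2 / Real.sqrt π) * a₁ / (2 * a₂)) *
      Real.exp (-a₂ * z ^ 2)) (((integrable_exp_neg_mul_sq ha₂).const_mul _).integrableOn)
    · apply Continuous.aestronglyMeasurable
      exact ((continuous_const.mul (Real.continuous_exp.comp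
        ((((continuous_const.mul continuous_id).add continuous_const).pow 2).neg))).mul
          continuous_const).mul
        ((Real.continuous_exp.comp (continuous_const.mul (continuous_pow 2))).neg.div_const _)
    · filter_upwards with z
      have h1 : Real.exp (-(a₁ * z + b₁) ^ 2) ≤ 1 := by
        apply Real.exp_le_one_iff.2; nlinarith [sq_nonneg (a₁ * z + b₁)]
      have hb : f₁ z = -(2 / Real.sqrt π * a₁ / (2 * a₂) *
          (Real.exp (-(a₁ * z + b₁) ^ 2) * Real.exp (-a₂ * z ^ 2))) := by
        rw [hf₁]; ring
      rw [hb, Real.norm_eq_abs, abs_neg, abs_of_nonneg (by positivity)]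
      calc 2 / Real.sqrt π * a₁ / (2 * a₂) *
            (Real.exp (-(a₁ * z + b₁) ^ 2) * Real.exp (-a₂ * z ^ 2))
          ≤ 2 / Real.sqrt π * a₁ / (2 * a₂) * (1 * Real.exp (-a₂ * z ^ 2)) := by gcongr
        _ = 2 / Real.sqrt π * a₁ / (2 * a₂) * Real.exp (-a₂ * z ^ 2) := by ring
  have hint₂ : IntegrableOn f₂ (Ioi (0:ℝ)) := by
    apply Integrable.mono' (g := fun z => |z * Real.exp (-a₂ * z ^ 2)|)
      (((integrable_mul_exp_neg_mul_sq ha₂).abs).integrableOn)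
    · apply Continuous.aestronglyMeasurable
      exact (continuous_erf.comp ((continuous_const.mul continuous_id).add
        continuous_const)).mul (continuous_id.mul (Real.continuous_exp.comp
        (continuous_const.mul (continuous_pow 2))))
    · filter_upwards with z
      rw [hf₂, Real.norm_eq_abs, abs_mul]
      calc |erf (a₁ * z + b₁)| * |z * Real.exp (-a₂ * z ^ 2)|
          ≤ 1 * |z * Real.exp (-a₂ * z ^ 2)| := by
            gcongr; exact abs_erf_le_one _
        _ = |z * Real.exp (-a₂ * z ^ 2)| := one_mul _
  have hcont : ContinuousWithinAt g (Ici 0) 0 := by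
    apply Continuous.continuousWithinAt
    exact (continuous_erf.comp ((continuous_const.mul continuous_id).add
      continuous_const)).mul ((Real.continuous_exp.comp
      (continuous_const.mul (continuous_pow 2))).neg.div_const _)
  have htend : Tendsto g atTop (nhds 0) := by
    apply squeeze_zero_norm (a := fun z => Real.exp (-a₂ * z ^ 2) / (2 * a₂))
    · intro z
      rw [hg, Real.norm_eq_abs, abs_mul, abs_div, abs_neg,
        abs_of_pos (Real.exp_pos _), abs_of_pos (by positivity : (0:ℝ) < 2 * a₂)]
      calc |erf (a₁ * z + b₁)| * (Real.exp (-a₂ * z ^ 2) / (2 * a₂))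
          ≤ 1 * (Real.exp (-a₂ * z ^ 2) / (2 * a₂)) := by
            gcongr; exact abs_erf_le_one _
        _ = _ := one_mul _
    · have h1 : Tendsto (fun z : ℝ => -a₂ * z ^ 2) atTop atBot :=
        (tendsto_pow_atTop (n := 2) (by norm_num)).const_mul_atTop_of_neg
          (by linarith : -a₂ < 0)
      have := (Real.tendsto_exp_atBot).comp h1
      simpa using this.div_const (2 * a₂)
  have key := integral_Ioi_of_hasDerivAt_of_tendsto hcont hderiv (hint₁.add hint₂) htend
  rw [integral_add hint₁ hint₂] at key
  have hg0 : g 0 = erf b₁ * (-1 / (2 * a₂)) := by simp [hg]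
  -- compute ∫ f₁
  have hexp : ∀ z : ℝ, Real.exp (-(a₁ * z + b₁) ^ 2) * Real.exp (-a₂ * z ^ 2) =
      Real.exp (-a₂ * b₁ ^ 2 / A) * Real.exp (-A * (z + c) ^ 2) := by
    intro z
    rw [← Real.exp_add, ← Real.exp_add]
    congr 1
    rw [hc, hA]
    field_simp
    ring
  have hintf₁ : ∫ z in Ioi (0:ℝ), f₁ z =
      -(a₁ / (2 * a₂ * Real.sqrt A)) * Real.exp (-a₂ * b₁ ^ 2 / A) *
        (1 - erf (a₁ * b₁ / Real.sqrt A)) := by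
    have heq : ∀ z : ℝ, f₁ z =
        (-(2 / Real.sqrt π * a₁ / (2 * a₂)) * Real.exp (-a₂ * b₁ ^ 2 / A)) *
          Real.exp (-A * (z + c) ^ 2) := by
      intro z
      calc f₁ z = -(2 / Real.sqrt π * a₁ / (2 * a₂)) *
            (Real.exp (-(a₁ * z + b₁) ^ 2) * Real.exp (-a₂ * z ^ 2)) := by rw [hf₁]; ring
        _ = -(2 / Real.sqrt π * a₁ / (2 * a₂)) *
            (Real.exp (-a₂ * b₁ ^ 2 / A) * Real.exp (-A * (z + c) ^ 2)) := by rw [hexp z]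
        _ = _ := by ring
    rw [show (fun z => f₁ z) = _ from funext heq]
    rw [integral_const_mul, integral_gauss_shift A c hApos]
    have hsac : Real.sqrt A * c = a₁ * b₁ / Real.sqrt A := by
      rw [hc, eq_div_iff hsA.ne']
      field_simp
      linear_combination (a₁ * b₁) * hsq
    rw [hsac]
    field_simp
  -- finish
  have : ∫ z in Ioi (0:ℝ), f₂ z = erf b₁ / (2 * a₂) +
      (a₁ / (2 * a₂ * Real.sqrt A)) * Real.exp (-a₂ * b₁ ^ 2 / A) *
        (1 - erf (a₁ * b₁ / Real.sqrt A)) := by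
    have := key
    rw [hg0, hintf₁] at this
    linear_combination this
  rw [← this]
  apply setIntegral_congr_fun measurableSet_Ioi
  intro z _
  rw [hf₂]
  ring
end

section
/- Let n ≥ 2, b > 0, and let 0 < λ₂ ≤ ⋯ ≤ λₙ be positive reals. For λ > 0 and 0 ≤ τ < π/(2λ), define f_λ(τ) = cos(λτ)/(λ(1 − sin(λτ))). Let Q be an orthogonal n×n matrix and Mₙ = Iₙ − (1/n)1ₙ1ₙᵀ, and for τ ≥ 0 define Σ(τ) = (b²/2) Mₙ Q diag(0, f_{λ₂}(τ), …, f_{λₙ}(τ)) Qᵀ Mₙ. Fix a nominal delay τ₀ > 0 and α ∈ [0, 1) with (1 + α)τ₀ < π/(2λₙ), and define ε⁺ = max_{2 ≤ i ≤ n} (f_{λᵢ}((1 + α)τ₀) − f_{λᵢ}(τ₀)) / f_{λᵢ}(τ₀) and ε⁻ = max_{2 ≤ i ≤ n} (f_{λᵢ}(τ₀) − f_{λᵢ}((1 − α)τ₀)) / f_{λᵢ}(τ₀). Then for every τ with (1 − α)τ₀ ≤ τ ≤ (1 + α)τ₀, one has (1 − ε⁻)Σ(τ₀) ⪯ Σ(τ)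 ⪯ (1 + ε⁺)Σ(τ₀) in the Loewner order. -/
/-!
`Σ(τ)` is the congruence `(M Q) D(τ) (M Q)ᵀ` of a diagonal matrix, so a Loewner comparison
between two such matrices reduces to comparing the diagonal entries. Each `f_λ` is increasing on
`[0, π/(2λ))`, because `cos x / (1 - sin x) = (1 + sin x) / cos x` has increasing numerator and
decreasing positive denominator there; hence `f_λ(τ)` lies between `f_λ((1-α)τ₀)` and
`f_λ((1+α)τ₀)`, and the definition of `ε±` turns this into the relative bounds
`(1 - ε⁻) f_λ(τ₀) ≤ f_λ(τ) ≤ (1 + ε⁺) f_λ(τ₀)`.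
-/

open Matrix Real Set

lemma cos_div_one_sub_sin_eq {x : ℝ} (hc : cos x ≠ 0) (hs : sin x ≠ 1) :
    cos x / (1 - sin x) = (1 + sin x) / cos x := by
  rw [div_eq_div_iff (sub_ne_zero.2 hs.symm) hc]
  nlinarith [sin_sq_add_cos_sq x]

lemma cos_div_one_sub_sin_pos {x : ℝ} (hx : x ∈ Ioo (-(π / 2)) (π / 2)) :
    0 < cos x / (1 - sin x) := by
  have hs : sin x < 1 := by
    rw [← sin_pi_div_two]
    exact sin_lt_sin_of_lt_of_le_pi_div_two (by linarith [hx.1, pi_pos]) le_rfl hx.2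
  exact div_pos (cos_pos_of_mem_Ioo hx) (sub_pos.2 hs)

lemma monotoneOn_cos_div_one_sub_sin :
    MonotoneOn (fun x => cos x / (1 - sin x)) (Ico 0 (π / 2)) := by
  intro x hx y hy hxy
  have hmem : ∀ z ∈ Ico 0 (π / 2), z ∈ Ioo (-(π / 2)) (π / 2) :=
    fun z hz => ⟨by linarith [hz.1, pi_pos], hz.2⟩
  have hcos : ∀ z ∈ Ico 0 (π / 2), 0 < cos z := fun z hz => cos_pos_of_mem_Ioo (hmem z hz)
  have hsin : ∀ z ∈ Ico 0 (π / 2), sin z ≠ 1 := fun z hz h =>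
    (cos_div_one_sub_sin_pos (hmem z hz)).ne' (by simp [h])
  dsimp only
  rw [cos_div_one_sub_sin_eq (hcos x hx).ne' (hsin x hx),
    cos_div_one_sub_sin_eq (hcos y hy).ne' (hsin y hy)]
  have hsin_y : 0 ≤ sin y := sin_nonneg_of_nonneg_of_le_pi hy.1 (by linarith [hy.2, pi_pos])
  apply div_le_div₀ (by linarith)
  · linarith [sin_le_sin_of_le_of_le_pi_div_two (by linarith [hx.1, pi_pos]) hy.2.le hxy]
  · exact hcos y hy
  · exact cos_le_cos_of_nonneg_of_le_pi hx.1 (by linarith [hy.2, pi_pos]) hxy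

noncomputable def delayGain (l τ : ℝ) : ℝ :=
  cos (l * τ) / (l * (1 - sin (l * τ)))

lemma delayGain_eq_div (l τ : ℝ) : delayGain l τ = cos (l * τ) / (1 - sin (l * τ)) / l := by
  rw [delayGain, div_div, mul_comm (1 - _) l]

lemma mul_mem_Ico_zero_pi_div_two {l τ : ℝ} (hl : 0 < l) (hτ : τ ∈ Ico 0 (π / (2 * l))) :
    l * τ ∈ Ico 0 (π / 2) := by
  refine ⟨mul_nonneg hl.le hτ.1, ?_⟩
  have := hτ.2
  rw [lt_div_iff₀ (by positivity)] at this
  linarith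

lemma monotoneOn_delayGain {l : ℝ} (hl : 0 < l) :
    MonotoneOn (delayGain l) (Ico 0 (π / (2 * l))) := by
  intro s hs t ht hst
  rw [delayGain_eq_div, delayGain_eq_div]
  exact div_le_div_of_nonneg_right (monotoneOn_cos_div_one_sub_sin
    (mul_mem_Ico_zero_pi_div_two hl hs) (mul_mem_Ico_zero_pi_div_two hl ht)
    (mul_le_mul_of_nonneg_left hst hl.le)) hl.le

lemma delayGain_pos {l τ : ℝ} (hl : 0 < l) (hτ : τ ∈ Ico 0 (π / (2 * l))) :
    0 < delayGain l τ := by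
  have hlτ := mul_mem_Ico_zero_pi_div_two hl hτ
  rw [delayGain_eq_div]
  exact div_pos (cos_div_one_sub_sin_pos ⟨by linarith [hlτ.1, pi_pos], hlτ.2⟩) hl

lemma delayGain_bounds_of_relative_deviation {l τ₀ α εp εm τ : ℝ} (hl : 0 < l)
    (hτ₀ : 0 < τ₀) (hα : α ∈ Ico 0 1) (hstab : (1 + α) * τ₀ < π / (2 * l))
    (hεp : (delayGain l ((1 + α) * τ₀) - delayGain l τ₀) / delayGain l τ₀ ≤ εp)
    (hεm : (delayGain l τ₀ - delayGain l ((1 - α) * τ₀)) / delayGain l τ₀ ≤ εm)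
    (hτl : (1 - α) * τ₀ ≤ τ) (hτu : τ ≤ (1 + α) * τ₀) :
    (1 - εm) * delayGain l τ₀ ≤ delayGain l τ ∧
      delayGain l τ ≤ (1 + εp) * delayGain l τ₀ := by
  have hlo : 0 ≤ (1 - α) * τ₀ := mul_nonneg (by linarith [hα.2]) hτ₀.le
  have hwindow : Icc ((1 - α) * τ₀) ((1 + α) * τ₀) ⊆ Ico 0 (π / (2 * l)) :=
    fun t ht => ⟨hlo.trans ht.1, ht.2.trans_lt hstab⟩
  have hmono := (monotoneOn_delayGain hl).mono hwindow
  have hτ₀_mem : τ₀ ∈ Icc ((1 - α) * τ₀) ((1 + α) * τ₀) :=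
    ⟨by nlinarith [hα.1], by nlinarith [hα.1]⟩
  have hpos := delayGain_pos hl (hwindow hτ₀_mem)
  rw [div_le_iff₀ hpos] at hεp hεm
  constructor
  · linarith [hmono (left_mem_Icc.2 (hτl.trans hτu)) ⟨hτl, hτu⟩ hτl]
  · linarith [hmono ⟨hτl, hτu⟩ (right_mem_Icc.2 (hτl.trans hτu)) hτu]

lemma Matrix.posSemidef_mul_diagonal_mul_conjTranspose_sub {m k R : Type*} [Finite m]
    [Fintype k] [DecidableEq k] [Ring R] [PartialOrder R] [StarRing R] [StarOrderedRing R]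
    (A : Matrix m k R) {d d' : k → R} (h : d ≤ d') :
    (A * diagonal d' * Aᴴ - A * diagonal d * Aᴴ).PosSemidef := by
  rw [← Matrix.sub_mul, ← Matrix.mul_sub, diagonal_sub]
  exact (PosSemidef.diagonal (sub_nonneg.2 h)).mul_mul_conjTranspose_same A

lemma Matrix.smul_mul_diagonal_mul_transpose_eq {n R : Type*} [Fintype n] [DecidableEq n]
    [CommRing R] [StarRing R] [TrivialStar R] {M : Matrix n n R} (hM : Mᵀ = M)
    (Q : Matrix n n R) (c : R) (d : n → R) :
    c • (M * Q * diagonal d * Qᵀ * M) = (M * Q) * diagonal (c • d) * (M * Q)ᴴ := by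
  rw [conjTranspose_eq_transpose_of_trivial, transpose_mul, hM, diagonal_smul]
  simp only [Matrix.mul_smul, Matrix.smul_mul, Matrix.mul_assoc]

theorem covariance_loewner_bounds_of_delay_uncertainty_general
    {n : ℕ} (b : ℝ)
    (lam : Fin (n + 2) → ℝ)
    (hlam_pos : ∀ i : Fin (n + 2), i ≠ 0 → 0 < lam i)
    (hlam_mono : ∀ i j : Fin (n + 2), i ≠ 0 → i ≤ j → lam i ≤ lam j)
    (f : ℝ → ℝ → ℝ)
    (hf : f = fun l τ => Real.cos (l * τ) / (l * (1 - Real.sin (l * τ))))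
    (Q : Matrix (Fin (n + 2)) (Fin (n + 2)) ℝ)
    (M : Matrix (Fin (n + 2)) (Fin (n + 2)) ℝ)
    (hM : M = 1 - ((n + 2 : ℝ))⁻¹ • Matrix.of (fun _ _ => (1 : ℝ)))
    (Sig : ℝ → Matrix (Fin (n + 2)) (Fin (n + 2)) ℝ)
    (hSig : ∀ τ : ℝ, Sig τ =
      (b ^ 2 / 2) •
        (M * Q * Matrix.diagonal (fun i => if i = 0 then 0 else f (lam i) τ) * Qᵀ * M))
    (τ₀ : ℝ) (hτ₀ : 0 < τ₀) (α : ℝ) (hα : α ∈ Set.Ico (0 : ℝ) 1)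
    (hstab : (1 + α) * τ₀ < π / (2 * lam (Fin.last (n + 1))))
    (εp εm : ℝ)
    (hεp : IsGreatest {x : ℝ | ∃ i : Fin (n + 2), i ≠ 0 ∧
      x = (f (lam i) ((1 + α) * τ₀) - f (lam i) τ₀) / f (lam i) τ₀} εp)
    (hεm : IsGreatest {x : ℝ | ∃ i : Fin (n + 2), i ≠ 0 ∧
      x = (f (lam i) τ₀ - f (lam i) ((1 - α) * τ₀)) / f (lam i) τ₀} εm) :
    ∀ τ : ℝ, (1 - α) * τ₀ ≤ τ → τ ≤ (1 + α) * τ₀ →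
      (Sig τ - (1 - εm) • Sig τ₀).PosSemidef ∧
      ((1 + εp) • Sig τ₀ - Sig τ).PosSemidef := by
  intro τ hτl hτu
  obtain rfl : f = delayGain := hf
  have hM_symm : Mᵀ = M := by
    subst hM
    ext i j
    simp [one_apply, eq_comm]
  have hSig_smul (c σ : ℝ) : c • Sig σ = (M * Q) * Matrix.diagonal ((c * (b ^ 2 / 2)) •
      fun i => if i = 0 then 0 else delayGain (lam i) σ) * (M * Q)ᴴ := by
    rw [hSig, smul_smul, smul_mul_diagonal_mul_transpose_eq hM_symm]
  have hbounds (i : Fin (n + 2)) (hi : i ≠ 0) :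
      (1 - εm) * delayGain (lam i) τ₀ ≤ delayGain (lam i) τ ∧
        delayGain (lam i) τ ≤ (1 + εp) * delayGain (lam i) τ₀ := by
    have hl := hlam_pos i hi
    have hstab_i : (1 + α) * τ₀ < π / (2 * lam i) :=
      hstab.trans_le (by gcongr; exact hlam_mono i _ hi (Fin.le_last i))
    exact delayGain_bounds_of_relative_deviation hl hτ₀ hα hstab_i
      (hεp.2 ⟨i, hi, rfl⟩) (hεm.2 ⟨i, hi, rfl⟩) hτl hτu
  constructor <;>
  · rw [← one_smul ℝ (Sig τ), hSig_smul, hSig_smul]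
    refine posSemidef_mul_diagonal_mul_conjTranspose_sub _ fun i => ?_
    simp only [Pi.smul_apply, smul_eq_mul]
    split_ifs with hi
    · simp
    · nlinarith [hbounds i hi]

/-- Loewner-order covariance bounds under time-delay perturbation: if the
delay `τ` lies in `[(1−α)τ₀, (1+α)τ₀]`, then the delayed steady-state covariance satisfies
`(1 − ε⁻)Σ(τ₀) ⪯ Σ(τ) ⪯ (1 + ε⁺)Σ(τ₀)`, where `ε±` are the maximal relative deviations of
`f_λ(τ) = cos(λτ)/(λ(1 − sin(λτ)))` over the nontrivial eigenvalues. -/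
theorem covariance_loewner_bounds_of_delay_uncertainty
    {n : ℕ} (b : ℝ) (hb : 0 < b)
    (lam : Fin (n + 2) → ℝ)
    (hlam_pos : ∀ i : Fin (n + 2), i ≠ 0 → 0 < lam i)
    (hlam_mono : ∀ i j : Fin (n + 2), i ≠ 0 → i ≤ j → lam i ≤ lam j)
    (f : ℝ → ℝ → ℝ)
    (hf : f = fun l τ => Real.cos (l * τ) / (l * (1 - Real.sin (l * τ))))
    (Q : Matrix (Fin (n + 2)) (Fin (n + 2)) ℝ) (hQ : Qᵀ * Q = 1)
    (M : Matrix (Fin (n + 2)) (Fin (n + 2)) ℝ)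
    (hM : M = 1 - ((n + 2 : ℝ))⁻¹ • Matrix.of (fun _ _ => (1 : ℝ)))
    (Sig : ℝ → Matrix (Fin (n + 2)) (Fin (n + 2)) ℝ)
    (hSig : ∀ τ : ℝ, Sig τ =
      (b ^ 2 / 2) •
        (M * Q * Matrix.diagonal (fun i => if i = 0 then 0 else f (lam i) τ) * Qᵀ * M))
    (τ₀ : ℝ) (hτ₀ : 0 < τ₀) (α : ℝ) (hα : α ∈ Set.Ico (0 : ℝ) 1)
    (hstab : (1 + α) * τ₀ < π / (2 * lam (Fin.last (n + 1))))
    (εp εm : ℝ)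
    (hεp : IsGreatest {x : ℝ | ∃ i : Fin (n + 2), i ≠ 0 ∧
      x = (f (lam i) ((1 + α) * τ₀) - f (lam i) τ₀) / f (lam i) τ₀} εp)
    (hεm : IsGreatest {x : ℝ | ∃ i : Fin (n + 2), i ≠ 0 ∧
      x = (f (lam i) τ₀ - f (lam i) ((1 - α) * τ₀)) / f (lam i) τ₀} εm) :
    ∀ τ : ℝ, (1 - α) * τ₀ ≤ τ → τ ≤ (1 + α) * τ₀ →
      (Sig τ - (1 - εm) • Sig τ₀).PosSemidef ∧
      ((1 + εp) • Sig τ₀ - Sig τ).PosSemidef :=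
  covariance_loewner_bounds_of_delay_uncertainty_general b lam hlam_pos hlam_mono f hf Q M hM Sig
    hSig τ₀ hτ₀ α hα hstab εp εm hεp hεm
end

section
/- Define g(u) = cos(u)/(u(1 − sin(u))) for u ∈ (0, π/2). Then: (i) g is differentiable on (0, π/2) with g'(u) = (u − cos(u)) / (u²(1 − sin(u))); (ii) there exists a unique u* ∈ (0, π/2) with u* = cos(u*); (iii) g is strictly decreasing on (0, u*) and strictly increasing on (u*, π/2), so u* is the unique minimizer of g on (0, π/2). -/
open Real

private lemma fmono : StrictMonoOn (fun u : ℝ => u - Real.cos u) (Set.Icc 0 (π/2)) := by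
  intro x hx y hy hxy
  have hc : Real.cos y < Real.cos x ∨ Real.cos y ≤ Real.cos x := by
    rcases eq_or_lt_of_le hx.1 with h | h
    · right
      exact Real.cos_le_cos_of_nonneg_of_le_pi hx.1 (hy.2.trans (by linarith [Real.pi_pos])) hxy.le
    · left
      exact Real.cos_lt_cos_of_nonneg_of_le_pi hx.1 (hy.2.trans (by linarith [Real.pi_pos])) hxy
  rcases hc with h | h <;> simp only <;> linarith

private lemma gderiv (u : ℝ) (hu : u ∈ Set.Ioo (0:ℝ) (π/2)) :
    HasDerivAt (fun u => Real.cos u / (u * (1 - Real.sin u)))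
      ((u - Real.cos u) / (u ^ 2 * (1 - Real.sin u))) u := by
  obtain ⟨hu0, hu2⟩ := hu
  have hs : Real.sin u < 1 := by
    have := Real.sin_lt_sin_of_lt_of_le_pi_div_two (x := u) (y := π/2)
      (by linarith) le_rfl hu2
    simpa using this
  have hu0' : u ≠ 0 := ne_of_gt hu0
  have hs' : 1 - Real.sin u ≠ 0 := by linarith
  have hden : u * (1 - Real.sin u) ≠ 0 := mul_ne_zero hu0' hs'
  have hd : HasDerivAt (fun u : ℝ => u * (1 - Real.sin u))
      (1 * (1 - Real.sin u) + u * (0 - Real.cos u)) u :=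
    (hasDerivAt_id u).mul ((hasDerivAt_const u 1).sub (Real.hasDerivAt_sin u))
  have := (Real.hasDerivAt_cos u).div hd hden
  refine this.congr_deriv ?_
  have hpy := Real.sin_sq_add_cos_sq u
  rw [div_eq_div_iff (pow_ne_zero 2 hden) (mul_ne_zero (pow_ne_zero 2 hu0') hs')]
  linear_combination (u ^ 3 * (1 - Real.sin u)) * hpy

/-- The function `g(u) = cos(u)/(u(1 − sin(u)))` on `(0, π/2)` has derivative
`(u − cos u)/(u²(1 − sin u))`, there is a unique `u* ∈ (0, π/2)` with `u* = cos u*`, and `g`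
is strictly decreasing on `(0, u*)`, strictly increasing on `(u*, π/2)`, with `u*` the
unique minimizer of `g` on `(0, π/2)`. -/
theorem g_deriv_and_unique_minimizer
    (g : ℝ → ℝ)
    (hg : g = fun u => Real.cos u / (u * (1 - Real.sin u))) :
    (∀ u ∈ Set.Ioo (0 : ℝ) (π / 2),
      HasDerivAt g ((u - Real.cos u) / (u ^ 2 * (1 - Real.sin u))) u) ∧
    (∃! ustar : ℝ, ustar ∈ Set.Ioo (0 : ℝ) (π / 2) ∧ ustar = Real.cos ustar) ∧
    (∀ ustar : ℝ, ustar ∈ Set.Ioo (0 : ℝ) (π / 2) → ustar = Real.cos ustar →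
      StrictAntiOn g (Set.Ioo 0 ustar) ∧
      StrictMonoOn g (Set.Ioo ustar (π / 2)) ∧
      ∀ u ∈ Set.Ioo (0 : ℝ) (π / 2), u ≠ ustar → g ustar < g u) := by
  subst hg
  set f : ℝ → ℝ := fun u => u - Real.cos u with hf
  have hpi : (0:ℝ) < π / 2 := by positivity
  have hd : ∀ u ∈ Set.Ioo (0 : ℝ) (π / 2),
      HasDerivAt (fun u => Real.cos u / (u * (1 - Real.sin u)))
        ((u - Real.cos u) / (u ^ 2 * (1 - Real.sin u))) u := fun u hu => gderiv u hu
  refine ⟨hd, ?_, ?_⟩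
  · -- existence and uniqueness of fixed point
    have hcont : ContinuousOn f (Set.Icc 0 (π/2)) := by fun_prop
    have hiv := intermediate_value_Icc hpi.le hcont
    have h0 : f 0 = -1 := by simp [hf]
    have h2 : f (π/2) = π/2 := by simp [hf]
    have : (0:ℝ) ∈ Set.Icc (f 0) (f (π/2)) := by
      rw [h0, h2]; constructor <;> linarith
    obtain ⟨u, hu, hfu⟩ := hiv this
    have hune0 : u ≠ 0 := by rintro rfl; rw [h0] at hfu; linarith
    have hune2 : u ≠ π/2 := by rintro rfl; rw [h2] at hfu; linarith
    have humem : u ∈ Set.Ioo (0:ℝ) (π/2) :=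
      ⟨lt_of_le_of_ne hu.1 (Ne.symm hune0), lt_of_le_of_ne hu.2 hune2⟩
    refine ⟨u, ⟨humem, by simpa [hf, sub_eq_zero] using hfu⟩, ?_⟩
    rintro v ⟨hv, hveq⟩
    have hfv : f v = 0 := by simp [hf, ← hveq]
    exact fmono.injOn (Set.mem_Icc_of_Ioo hv) (Set.mem_Icc_of_Ioo humem)
      (hfv.trans hfu.symm)
  · rintro us hmem hfix
    obtain ⟨hus0, hus2⟩ := hmem
    have hfus : f us = 0 := by simp [hf, ← hfix]
    have hcontOn : ∀ s : Set ℝ, s ⊆ Set.Ioo 0 (π/2) →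
        ContinuousOn (fun u => Real.cos u / (u * (1 - Real.sin u))) s := by
      intro s hs x hx
      exact ((hd x (hs hx)).differentiableAt.continuousAt).continuousWithinAt
    have hderiv : ∀ x ∈ Set.Ioo (0:ℝ) (π/2),
        deriv (fun u => Real.cos u / (u * (1 - Real.sin u))) x
          = (x - Real.cos x) / (x ^ 2 * (1 - Real.sin x)) := fun x hx => (hd x hx).deriv
    have hdenpos : ∀ x ∈ Set.Ioo (0:ℝ) (π/2), 0 < x ^ 2 * (1 - Real.sin x) := by
      intro x hx
      have hs : Real.sin x < 1 := by
        have := Real.sin_lt_sin_of_lt_of_le_pi_div_two (x := x) (y := π/2)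
          (by linarith [hx.1]) le_rfl hx.2
        simpa using this
      have h1 := hx.1
      have h2 : 0 < 1 - Real.sin x := by linarith
      positivity
    have hanti : StrictAntiOn (fun u => Real.cos u / (u * (1 - Real.sin u))) (Set.Ioc 0 us) := by
      apply strictAntiOn_of_deriv_neg (convex_Ioc 0 us)
        (hcontOn _ (fun x hx => ⟨hx.1, lt_of_le_of_lt hx.2 hus2⟩))
      intro x hx
      rw [interior_Ioc] at hx
      have hx' : x ∈ Set.Ioo (0:ℝ) (π/2) := ⟨hx.1, hx.2.trans hus2⟩
      rw [hderiv x hx']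
      have hnum : x - Real.cos x < 0 := by
        have := fmono (Set.mem_Icc_of_Ioo hx') (Set.mem_Icc_of_Ioo ⟨hus0, hus2⟩) hx.2
        simp only [hf] at this
        linarith [hfus, (by simp [hf] : f us = us - Real.cos us)]
      exact div_neg_of_neg_of_pos hnum (hdenpos x hx')
    have hmono : StrictMonoOn (fun u => Real.cos u / (u * (1 - Real.sin u))) (Set.Ico us (π/2)) := by
      apply strictMonoOn_of_deriv_pos (convex_Ico us (π/2))
        (hcontOn _ (fun x hx => ⟨lt_of_lt_of_le hus0 hx.1, hx.2⟩))
      intro x hx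
      rw [interior_Ico] at hx
      have hx' : x ∈ Set.Ioo (0:ℝ) (π/2) := ⟨hus0.trans hx.1, hx.2⟩
      rw [hderiv x hx']
      have hnum : 0 < x - Real.cos x := by
        have := fmono (Set.mem_Icc_of_Ioo ⟨hus0, hus2⟩) (Set.mem_Icc_of_Ioo hx') hx.1
        simp only [hf] at this
        linarith [(by simp [hf] : f us = us - Real.cos us), hfus]
      exact div_pos hnum (hdenpos x hx')
    refine ⟨hanti.mono Set.Ioo_subset_Ioc_self, hmono.mono Set.Ioo_subset_Ico_self, ?_⟩
    intro u hu hne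
    rcases lt_or_gt_of_ne hne with h | h
    · exact hanti ⟨hu.1, h.le⟩ ⟨hus0, le_rfl⟩ h
    · exact hmono ⟨le_rfl, hus2⟩ ⟨h.le, hu.2⟩ h
end

section
/- Let n ≥ 2, b > 0, τ > 0, and let 0 < λ₂ ≤ ⋯ ≤ λₙ be positive reals. Define g_τ(λ) = cos(λτ)/(λ(1 − sin(λτ))) for 0 < λ < π/(2τ), and let λ̄ ∈ (0, π/(2τ)) be the unique solution of λ̄τ = cos(λ̄τ). Let Q be an orthogonal n×n matrix, Mₙ = Iₙ − (1/n)1ₙ1ₙᵀ, and for a scaling factor c > 0 define Σ(c) = (b²/2) Mₙ Q diag(0, g_τ(cλ₂), …, g_τ(cλₙ)) Qᵀ Mₙ. Let α ∈ [0, 1) and assume (1 + α)λₙ ≤ λ̄ (so all scaled eigenvalues lie in the region where g_τ is decreasing). Define ε⁻ = max_{2 ≤ i ≤ n} (g_τ(λᵢ) − g_τ((1 + α)λᵢ)) / g_τ(λᵢ) and ε⁺ = max_{2 ≤ i ≤ n} (g_τ((1 − α)λᵢ) − g_τ(λᵢ)) / g_τ(λᵢ). Then for every c ∈ [1 − α,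 1 + α], one has (1 − ε⁻)Σ(1) ⪯ Σ(c) ⪯ (1 + ε⁺)Σ(1) in the Loewner order. -/
open Matrix Real


section Aux

lemma my_psd_smul {m : Type*} [Fintype m] {A : Matrix m m ℝ} (hA : A.PosSemidef) {r : ℝ}
    (hr : 0 ≤ r) : (r • A).PosSemidef := by
  refine ⟨?_, fun x => ?_⟩
  · unfold Matrix.IsHermitian
    rw [conjTranspose_smul, hA.1]
    simp
  · have := hA.2 x
    have e : (x.sum fun i xi => x.sum fun j xj => star xi * (r • A) i j * xj) =
        r * (x.sum fun i xi => x.sum fun j xj => star xi * A i j * xj) := by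
      simp only [Finsupp.mul_sum, Matrix.smul_apply, smul_eq_mul]
      apply Finsupp.sum_congr; intros; apply Finsupp.sum_congr; intros; ring
    rw [e]
    exact mul_nonneg hr this

lemma my_psd_sandwich {m : Type*} [Fintype m] [DecidableEq m] (B : Matrix m m ℝ) (d : m → ℝ)
    (hd : ∀ i, 0 ≤ d i) {r : ℝ} (hr : 0 ≤ r) :
    (r • (B * Matrix.diagonal d * Bᵀ)).PosSemidef := by
  have h1 : (Matrix.diagonal d).PosSemidef := Matrix.posSemidef_diagonal_iff.mpr hd
  have h2 := h1.mul_mul_conjTranspose_same B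
  rw [show Bᴴ = Bᵀ from rfl] at h2
  exact my_psd_smul h2 hr

lemma gtau_pos (τ : ℝ) (hτ : 0 < τ) (lamBar : ℝ) (h2 : lamBar < π / (2 * τ))
    {x : ℝ} (hx : 0 < x) (hx2 : x ≤ lamBar) :
    0 < Real.cos (x * τ) / (x * (1 - Real.sin (x * τ))) := by
  have hlt : x * τ < π / 2 := by
    have : lamBar * τ < (π / (2 * τ)) * τ := by
      exact mul_lt_mul_of_pos_right h2 hτ
    have h3 : (π / (2 * τ)) * τ = π / 2 := by field_simp
    nlinarith [mul_le_mul_of_nonneg_right hx2 hτ.le]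
  have hcos : 0 < Real.cos (x * τ) :=
    Real.cos_pos_of_mem_Ioo ⟨by nlinarith [Real.pi_pos, mul_pos hx hτ], hlt⟩
  have hsin : Real.sin (x * τ) < 1 := by
    nlinarith [Real.sin_sq_add_cos_sq (x * τ), Real.neg_one_le_sin (x * τ)]
  exact div_pos hcos (mul_pos hx (by linarith))

lemma gtau_anti (τ : ℝ) (hτ : 0 < τ) (lamBar : ℝ) (h1 : 0 < lamBar) (h2 : lamBar < π / (2 * τ))
    (hroot : lamBar * τ = Real.cos (lamBar * τ)) :
    AntitoneOn (fun l => Real.cos (l * τ) / (l * (1 - Real.sin (l * τ)))) (Set.Ioc 0 lamBar) := by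
  have hπ2 : (π / (2 * τ)) * τ = π / 2 := by field_simp
  -- basic facts for x in (0, lamBar]
  have hfacts : ∀ x : ℝ, 0 < x → x ≤ lamBar → 0 < Real.cos (x * τ) ∧ Real.sin (x * τ) < 1 ∧
      x * τ < π / 2 := by
    intro x hx hx2
    have hlt : x * τ < π / 2 := by
      have : lamBar * τ < (π / (2 * τ)) * τ := mul_lt_mul_of_pos_right h2 hτ
      nlinarith [mul_le_mul_of_nonneg_right hx2 hτ.le]
    have hcos : 0 < Real.cos (x * τ) :=
      Real.cos_pos_of_mem_Ioo ⟨by nlinarith [Real.pi_pos, mul_pos hx hτ], hlt⟩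
    have hsin : Real.sin (x * τ) < 1 := by
      nlinarith [Real.sin_sq_add_cos_sq (x * τ), Real.neg_one_le_sin (x * τ)]
    exact ⟨hcos, hsin, hlt⟩
  have hden : ∀ x : ℝ, 0 < x → x ≤ lamBar → x * (1 - Real.sin (x * τ)) ≠ 0 := by
    intro x hx hx2
    obtain ⟨_, hs, _⟩ := hfacts x hx hx2
    have : 0 < 1 - Real.sin (x * τ) := by linarith
    positivity
  have hderiv : ∀ x ∈ Set.Ioo (0 : ℝ) lamBar,
      HasDerivAt (fun l => Real.cos (l * τ) / (l * (1 - Real.sin (l * τ))))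
        (((-Real.sin (x * τ) * τ) * (x * (1 - Real.sin (x * τ))) -
          Real.cos (x * τ) * (1 * (1 - Real.sin (x * τ)) + x * (-(Real.cos (x * τ) * τ)))) /
          (x * (1 - Real.sin (x * τ))) ^ 2) x := by
    intro x hx
    have hid : HasDerivAt (fun y : ℝ => y * τ) τ x := by
      simpa using (hasDerivAt_id x).mul_const τ
    have hnum : HasDerivAt (fun y : ℝ => Real.cos (y * τ)) (-Real.sin (x * τ) * τ) x :=
      by have := (Real.hasDerivAt_cos (x * τ)).comp x hid; exact this
    have hsub : HasDerivAt (fun y : ℝ => 1 - Real.sin (y * τ)) (-(Real.cos (x * τ) * τ)) x :=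
      by have := ((Real.hasDerivAt_sin (x * τ)).comp x hid).const_sub 1; exact this
    have hd : HasDerivAt (fun y : ℝ => y * (1 - Real.sin (y * τ)))
        (1 * (1 - Real.sin (x * τ)) + x * (-(Real.cos (x * τ) * τ))) x :=
      (hasDerivAt_id x).mul hsub
    exact hnum.div hd (hden x hx.1 hx.2.le)
  apply antitoneOn_of_deriv_nonpos (convex_Ioc 0 lamBar)
  · apply ContinuousOn.div
    · fun_prop
    · fun_prop
    · intro x hx; exact hden x hx.1 hx.2
  · rw [interior_Ioc]
    intro x hx
    exact (hderiv x hx).differentiableAt.differentiableWithinAt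
  · rw [interior_Ioc]
    intro x hx
    rw [(hderiv x hx).deriv]
    obtain ⟨hcos, hsin, hlt⟩ := hfacts x hx.1 hx.2.le
    apply div_nonpos_of_nonpos_of_nonneg _ (sq_nonneg _)
    have hmono : x * τ - Real.cos (x * τ) ≤ 0 := by
      have h1' : x * τ ≤ lamBar * τ := mul_le_mul_of_nonneg_right hx.2.le hτ.le
      have h2' : Real.cos (lamBar * τ) ≤ Real.cos (x * τ) := by
        apply Real.cos_le_cos_of_nonneg_of_le_pi
        · exact mul_nonneg hx.1.le hτ.le
        · obtain ⟨_, _, hlt2⟩ := hfacts lamBar h1 le_rfl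
          nlinarith [Real.pi_pos]
        · exact h1'
      linarith [h1', h2', hroot]
    have hpyth := Real.sin_sq_add_cos_sq (x * τ)
    nlinarith [mul_nonneg (by linarith : (0:ℝ) ≤ 1 - Real.sin (x * τ)) (neg_nonneg.mpr hmono)]

end Aux


/-- Loewner-order covariance bounds under uniform edge-weight scaling (non-zero
delay): if all scaled Laplacian eigenvalues stay in the decreasing region of
`g_τ(λ) = cos(λτ)/(λ(1 − sin(λτ)))` (to the left of its unique minimizer `λ̄`), then for any
uniform scaling `c ∈ [1 − α, 1 + α]`, `(1 − ε⁻)Σ(1) ⪯ Σ(c) ⪯ (1 + ε⁺)Σ(1)`. -/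
theorem covariance_loewner_bounds_of_uniform_weight_uncertainty
    {n : ℕ} (b τ : ℝ) (hb : 0 < b) (hτ : 0 < τ)
    (lam : Fin (n + 2) → ℝ)
    (hlam_pos : ∀ i : Fin (n + 2), i ≠ 0 → 0 < lam i)
    (hlam_mono : ∀ i j : Fin (n + 2), i ≠ 0 → i ≤ j → lam i ≤ lam j)
    (g : ℝ → ℝ)
    (hg : g = fun l => Real.cos (l * τ) / (l * (1 - Real.sin (l * τ))))
    (lamBar : ℝ) (hlamBar : lamBar ∈ Set.Ioo (0 : ℝ) (π / (2 * τ)))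
    (hlamBar_root : lamBar * τ = Real.cos (lamBar * τ))
    (hlamBar_unique : ∀ x ∈ Set.Ioo (0 : ℝ) (π / (2 * τ)),
      x * τ = Real.cos (x * τ) → x = lamBar)
    (Q : Matrix (Fin (n + 2)) (Fin (n + 2)) ℝ) (hQ : Qᵀ * Q = 1)
    (M : Matrix (Fin (n + 2)) (Fin (n + 2)) ℝ)
    (hM : M = 1 - ((n + 2 : ℝ))⁻¹ • Matrix.of (fun _ _ => (1 : ℝ)))
    (Sig : ℝ → Matrix (Fin (n + 2)) (Fin (n + 2)) ℝ)
    (hSig : ∀ c : ℝ, Sig c =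
      (b ^ 2 / 2) •
        (M * Q * Matrix.diagonal (fun i => if i = 0 then 0 else g (c * lam i)) * Qᵀ * M))
    (α : ℝ) (hα : α ∈ Set.Ico (0 : ℝ) 1)
    (hregion : (1 + α) * lam (Fin.last (n + 1)) ≤ lamBar)
    (εm εp : ℝ)
    (hεm : IsGreatest {x : ℝ | ∃ i : Fin (n + 2), i ≠ 0 ∧
      x = (g (lam i) - g ((1 + α) * lam i)) / g (lam i)} εm)
    (hεp : IsGreatest {x : ℝ | ∃ i : Fin (n + 2), i ≠ 0 ∧
      x = (g ((1 - α) * lam i) - g (lam i)) / g (lam i)} εp) :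
    ∀ c : ℝ, 1 - α ≤ c → c ≤ 1 + α →
      (Sig c - (1 - εm) • Sig 1).PosSemidef ∧
      ((1 + εp) • Sig 1 - Sig c).PosSemidef := by
  intro c hc1 hc2
  obtain ⟨hα0, hα1⟩ := hα
  obtain ⟨hlb0, hlbπ⟩ := hlamBar
  have hganti := gtau_anti τ hτ lamBar hlb0 hlbπ hlamBar_root
  have gdef : ∀ x, g x = Real.cos (x * τ) / (x * (1 - Real.sin (x * τ))) := by
    intro x; rw [hg]
  have hA : ∀ x y : ℝ, 0 < x → x ≤ y → y ≤ lamBar → g y ≤ g x := by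
    intro x y hx hxy hy
    rw [gdef, gdef]
    exact hganti ⟨hx, hxy.trans hy⟩ ⟨hx.trans_le hxy, hy⟩ hxy
  have hP : ∀ x : ℝ, 0 < x → x ≤ lamBar → 0 < g x := by
    intro x hx hx2
    rw [gdef]
    exact gtau_pos τ hτ lamBar hlbπ hx hx2
  have hc0 : 0 < c := by linarith
  -- the scalar bounds
  have hscalar : ∀ i : Fin (n + 2), i ≠ 0 →
      (1 - εm) * g (1 * lam i) ≤ g (c * lam i) ∧ g (c * lam i) ≤ (1 + εp) * g (1 * lam i) := by
    intro i hi
    have hL : 0 < lam i := hlam_pos i hi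
    have hLle : lam i ≤ lam (Fin.last (n + 1)) :=
      hlam_mono i (Fin.last (n + 1)) hi (Fin.le_last i)
    have hup : (1 + α) * lam i ≤ lamBar := by
      refine le_trans ?_ hregion
      nlinarith
    have hLbar : lam i ≤ lamBar := by nlinarith
    have hcLbar : c * lam i ≤ lamBar := by nlinarith
    have hcL : 0 < c * lam i := mul_pos hc0 hL
    have hgL : 0 < g (lam i) := hP _ hL hLbar
    have h1 : (g (lam i) - g ((1 + α) * lam i)) / g (lam i) ≤ εm := hεm.2 ⟨i, hi, rfl⟩
    have h2 : (g ((1 - α) * lam i) - g (lam i)) / g (lam i) ≤ εp := hεp.2 ⟨i, hi, rfl⟩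
    rw [div_le_iff₀ hgL] at h1 h2
    have hlow : g ((1 + α) * lam i) ≤ g (c * lam i) :=
      hA (c * lam i) ((1 + α) * lam i) hcL (by nlinarith) hup
    have hhigh : g (c * lam i) ≤ g ((1 - α) * lam i) :=
      hA ((1 - α) * lam i) (c * lam i) (by nlinarith) (by nlinarith) hcLbar
    rw [one_mul]
    constructor <;> nlinarith
  have hMT : Mᵀ = M := by
    ext i j
    simp [hM, Matrix.one_apply, eq_comm]
  have hbsq : (0 : ℝ) ≤ b ^ 2 / 2 := by positivity
  have expand : ∀ d : Fin (n + 2) → ℝ,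
      (b ^ 2 / 2) • (M * Q * Matrix.diagonal d * Qᵀ * M) =
      (b ^ 2 / 2) • ((M * Q) * Matrix.diagonal d * (M * Q)ᵀ) := by
    intro d
    rw [Matrix.transpose_mul, hMT, Matrix.mul_assoc]
  constructor
  · have key : Sig c - (1 - εm) • Sig 1 =
        (b ^ 2 / 2) • ((M * Q) *
          Matrix.diagonal (fun i => (if i = 0 then 0 else g (c * lam i)) -
            (1 - εm) * (if i = 0 then 0 else g (1 * lam i))) * (M * Q)ᵀ) := by
      rw [hSig c, hSig 1, expand, expand]
      have hdiag : Matrix.diagonal (fun i => (if i = 0 then 0 else g (c * lam i)) -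
            (1 - εm) * (if i = 0 then 0 else g (1 * lam i))) =
          Matrix.diagonal (fun i => if i = 0 then 0 else g (c * lam i)) -
            (1 - εm) • Matrix.diagonal (fun i => if i = 0 then 0 else g (1 * lam i)) := by
        ext i j
        by_cases h : i = j <;> simp [Matrix.diagonal, h]
      rw [hdiag]
      simp only [Matrix.mul_sub, Matrix.sub_mul, Matrix.smul_mul, Matrix.mul_smul, smul_sub,
        smul_smul]
      congr 1
      ring_nf
    rw [key]
    apply my_psd_sandwich
    · intro i
      by_cases h : i = 0
      · simp [h]
      · have := (hscalar i h).1
        simp only [if_neg h]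
        linarith
    · exact hbsq
  · have key : (1 + εp) • Sig 1 - Sig c =
        (b ^ 2 / 2) • ((M * Q) *
          Matrix.diagonal (fun i => (1 + εp) * (if i = 0 then 0 else g (1 * lam i)) -
            (if i = 0 then 0 else g (c * lam i))) * (M * Q)ᵀ) := by
      rw [hSig c, hSig 1, expand, expand]
      have hdiag : Matrix.diagonal (fun i => (1 + εp) * (if i = 0 then 0 else g (1 * lam i)) -
            (if i = 0 then 0 else g (c * lam i))) =
          (1 + εp) • Matrix.diagonal (fun i => if i = 0 then 0 else g (1 * lam i)) -
            Matrix.diagonal (fun i => if i = 0 then 0 else g (c * lam i)) := by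
        ext i j
        by_cases h : i = j <;> simp [Matrix.diagonal, h]
      rw [hdiag]
      simp only [Matrix.mul_sub, Matrix.sub_mul, Matrix.smul_mul, Matrix.mul_smul, smul_sub,
        smul_smul]
      congr 1
      ring_nf
    rw [key]
    apply my_psd_sandwich
    · intro i
      by_cases h : i = 0
      · simp [h]
      · have := (hscalar i h).2
        simp only [if_neg h]
        linarith
    · exact hbsq
end

section
/- Let n ≥ 2 and let Σ be a real symmetric positive semidefinite n×n matrix with Σ1ₙ = 0. Let ψₙ be the largest eigenvalue of Σ, and let ψ₂ = min { xᵀΣx / xᵀx : x ∈ ℝⁿ, x ≠ 0, x ⊥ 1ₙ } be the smallest eigenvalue of Σ restricted to the orthogonal complement of 1ₙ. Then every diagonal entry of Σ satisfies ψ₂(1 − 1/n) ≤ Σᵢᵢ ≤ ψₙ(1 − 1/n) for all i ∈ {1, …, n}. -/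
open Matrix

lemma rayleigh_upper {N : ℕ} (S : Matrix (Fin N) (Fin N) ℝ) (hS : S.IsHermitian)
    (ψ : ℝ) (hψ : ∀ k, hS.eigenvalues k ≤ ψ) (x : Fin N → ℝ) :
    x ⬝ᵥ S.mulVec x ≤ ψ * (x ⬝ᵥ x) := by
  set U : Matrix (Fin N) (Fin N) ℝ := (hS.eigenvectorUnitary : Matrix (Fin N) (Fin N) ℝ) with hU
  have hstar : star U = Uᵀ := by
    rw [Matrix.star_eq_conjTranspose, conjTranspose_eq_transpose_of_trivial]
  set c : Fin N → ℝ := star U *ᵥ x with hc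
  have hdiag : S = U * diagonal hS.eigenvalues * star U := by
    have := hS.spectral_theorem
    simpa using this
  have hkey : ∀ y : Fin N → ℝ, x ⬝ᵥ (U *ᵥ y) = c ⬝ᵥ y := by
    intro y
    rw [hc, hstar, mulVec_transpose, ← dotProduct_mulVec]
  have h1 : x ⬝ᵥ S.mulVec x = ∑ k, hS.eigenvalues k * (c k)^2 := by
    conv_lhs => rw [hdiag]
    rw [Matrix.mul_assoc, ← mulVec_mulVec, hkey, ← mulVec_mulVec, ← hc]
    simp only [dotProduct, mulVec_diagonal, sq]
    exact Finset.sum_congr rfl fun k _ => by ring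
  have h2 : x ⬝ᵥ x = ∑ k, (c k)^2 := by
    have hcc : c ⬝ᵥ c = x ⬝ᵥ x := by
      nth_rewrite 1 [hc]
      rw [hstar, mulVec_transpose, dotProduct_mulVec, vecMul_vecMul,
        show U * star U = 1 from Unitary.coe_mul_star_self hS.eigenvectorUnitary,
        vecMul_one]
    rw [← hcc]; simp [dotProduct, sq]
  rw [h1, h2, Finset.mul_sum]
  exact Finset.sum_le_sum fun k _ => mul_le_mul_of_nonneg_right (hψ k) (sq_nonneg _)

open Matrix


/-- For a real symmetric PSD matrix `Σ` of size `n ≥ 2` with `Σ1ₙ = 0`, every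
diagonal entry lies between `ψ₂(1 − 1/n)` and `ψₙ(1 − 1/n)`, where `ψₙ` is the largest
eigenvalue and `ψ₂` the smallest eigenvalue on the orthogonal complement of the
all-ones vector (i.e. the minimum Rayleigh quotient over `x ⊥ 1ₙ`). -/
theorem diagonal_rayleigh_bounds
    {n : ℕ} (S : Matrix (Fin (n + 2)) (Fin (n + 2)) ℝ)
    (hpsd : S.PosSemidef)
    (hones : S.mulVec (fun _ => (1 : ℝ)) = 0)
    (ψn : ℝ)
    (hψn : IsGreatest {x : ℝ | ∃ v : Fin (n + 2) → ℝ, v ≠ 0 ∧ S.mulVec v = x • v} ψn)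
    (ψ2 : ℝ)
    (hψ2 : IsLeast {r : ℝ | ∃ x : Fin (n + 2) → ℝ, x ≠ 0 ∧
      (x ⬝ᵥ fun _ => (1 : ℝ)) = 0 ∧ r = (x ⬝ᵥ S.mulVec x) / (x ⬝ᵥ x)} ψ2) :
    ∀ i : Fin (n + 2),
      ψ2 * (1 - 1 / (n + 2 : ℝ)) ≤ S i i ∧ S i i ≤ ψn * (1 - 1 / (n + 2 : ℝ)) := by
  intro i
  have hS : S.IsHermitian := hpsd.1
  set N : ℝ := (n : ℝ) + 2 with hN
  have hNpos : (0 : ℝ) < N := by positivity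
  have hfrac : (0 : ℝ) < 1 - 1 / N := by
    rw [sub_pos, div_lt_one hNpos]; linarith
  set x : Fin (n + 2) → ℝ := fun j => (Pi.single i 1 : Fin (n+2) → ℝ) j - 1 / N with hx
  have hx1 : (x ⬝ᵥ fun _ => (1 : ℝ)) = 0 := by
    simp [hx, dotProduct, sub_div, Finset.sum_sub_distrib, Finset.sum_pi_single]
    field_simp
    rw [hN]; ring
  have hxne : x ≠ 0 := by
    intro h
    have := congrFun h i
    simp [hx, sub_eq_zero] at this
    have hn0 : (0:ℝ) ≤ (n:ℝ) := Nat.cast_nonneg n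
    linarith
  have hxx : x ⬝ᵥ x = 1 - 1 / N := by
    simp only [hx, dotProduct, Pi.single_apply, sub_mul, mul_sub,
      Finset.sum_sub_distrib, ite_mul, mul_ite, one_mul, mul_one, zero_mul, mul_zero,
      Finset.sum_ite_eq', Finset.mem_univ, if_true, Finset.sum_const, Finset.card_univ,
      Fintype.card_fin, nsmul_eq_mul]
    push_cast
    field_simp
    rw [hN]; ring
  have hSx : S.mulVec x = S.mulVec (Pi.single i 1) := by
    have : x = Pi.single i 1 - fun _ => 1 / N := by ext j; simp [hx]
    rw [this, sub_eq_add_neg, mulVec_add, mulVec_neg]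
    have h1 : (fun _ : Fin (n+2) => 1 / N) = (1/N) • (fun _ : Fin (n+2) => (1:ℝ)) := by
      ext j; simp
    rw [h1, mulVec_smul, hones, smul_zero, neg_zero, add_zero]
  have hone_Sx : (fun _ : Fin (n+2) => (1:ℝ)) ⬝ᵥ S.mulVec (Pi.single i 1) = 0 := by
    rw [dotProduct_mulVec, ← mulVec_transpose,
      show Sᵀ = S from by rw [← conjTranspose_eq_transpose_of_trivial]; exact hS, hones]
    simp
  have hxSx : x ⬝ᵥ S.mulVec x = S i i := by
    rw [hSx]
    have : x ⬝ᵥ S.mulVec (Pi.single i 1) =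
        Pi.single i 1 ⬝ᵥ S.mulVec (Pi.single i 1)
          - (1/N) * ((fun _ : Fin (n+2) => (1:ℝ)) ⬝ᵥ S.mulVec (Pi.single i 1)) := by
      simp [hx, dotProduct, sub_mul, Finset.sum_sub_distrib, Finset.mul_sum]
    rw [this, hone_Sx, mul_zero, sub_zero]
    simp [mulVec_single, single_dotProduct]
  constructor
  · have hmem : (x ⬝ᵥ S.mulVec x) / (x ⬝ᵥ x) ∈ {r : ℝ | ∃ y : Fin (n + 2) → ℝ, y ≠ 0 ∧
        (y ⬝ᵥ fun _ => (1 : ℝ)) = 0 ∧ r = (y ⬝ᵥ S.mulVec y) / (y ⬝ᵥ y)} :=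
      ⟨x, hxne, hx1, rfl⟩
    have := hψ2.2 hmem
    rw [hxSx, hxx] at this
    exact (le_div_iff₀ hfrac).mp this
  · have hub : ∀ k, hS.eigenvalues k ≤ ψn := by
      intro k
      apply hψn.2
      exact ⟨hS.eigenvectorBasis k, by
        intro h
        have := hS.eigenvectorBasis.orthonormal.1 k
        have h' : hS.eigenvectorBasis k = 0 := by simpa using congrArg (WithLp.toLp 2) h
        rw [h'] at this; simp at this, hS.mulVec_eigenvectorBasis k⟩
    have := rayleigh_upper S hS ψn hub x
    rw [hxSx, hxx] at this
    exact this
end
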